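/- For every fixed integer n ≥ 3 and all a ≥ 0, k ≥ 0, b ≥ 1, the Toads and Frogs position L T^a F □ T^k F T □ F^b, where L is any finite sequence over {T,F} ending in F (possibly interpreted as the position T^a F □ T^k F T □ F^b with the prefix L), has game value ≤ 1/2^n. -/

import Mathlib

universe u

namespace SetTheory

/-- Pre-games, as in the older Mathlib (`SetTheory.PGame`), since removed from Mathlib. -/
inductive PGame : Type (u + 1)
  | mk : ∀ α β : Type u, (α → PGame) → (β → PGame) → PGame

namespace PGame

instance : Zero PGame.{u} := ⟨⟨PEmpty, PEmpty, PEmpty.elim, PEmpty.elim⟩⟩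

instance : One PGame.{u} := ⟨⟨PUnit, PEmpty, fun _ => 0, PEmpty.elim⟩⟩

/-- Negation of a pre-game, swapping the roles of the players. -/
def neg : PGame.{u} → PGame.{u}
  | mk l r L R => mk r l (fun i => neg (R i)) (fun i => neg (L i))

instance : Neg PGame.{u} := ⟨neg⟩

/-- The pair `(x ≤ y, x ⧏ y)`, defined by simultaneous recursion as in the older Mathlib:
`x ≤ y ↔ (∀ i, xL i ⧏ y) ∧ ∀ j, x ⧏ yR j` and
`x ⧏ y ↔ (∃ i, x ≤ yL i) ∨ ∃ j, xR j ≤ y`. -/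
noncomputable def leLf (x : PGame.{u}) : PGame.{u} → Prop × Prop :=
  PGame.rec (motive := fun _ => PGame.{u} → Prop × Prop)
    (fun xl xr xL xR ihxL ihxR y =>
      PGame.rec (motive := fun _ => Prop × Prop)
        (fun yl yr yL yR ihyL ihyR =>
          ((∀ i, (ihxL i (mk yl yr yL yR)).2) ∧ ∀ j, (ihyR j).2,
            (∃ i, (ihyL i).1) ∨ ∃ j, (ihxR j (mk yl yr yL yR)).1))
        y) x

instance : LE PGame.{u} := ⟨fun x y => (leLf x y).1⟩

/-- `powHalf n` is the pre-game `1/2^n`, as in the older Mathlib. -/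
def powHalf : ℕ → PGame.{u}
  | 0 => 1
  | n + 1 => ⟨PUnit, PUnit, 0, fun _ => powHalf n⟩

end PGame

end SetTheory

open SetTheory

inductive Cell : Type
  | T | F | E
deriving DecidableEq

/-- Positions reachable from `l` by a single Toad (Left) move:
a Toad steps right into an empty square, or jumps over one adjacent Frog
into the empty square beyond. -/
def toadMoves : List Cell → List (List Cell)
  | [] => []
  | c :: rest =>
    (match c, rest with
     | Cell.T, Cell.E :: r => [Cell.E :: Cell.T :: r]
     | Cell.T, Cell.F :: Cell.E :: r => [Cell.E :: Cell.F :: Cell.T :: r]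
     | _, _ => []) ++ (toadMoves rest).map (c :: ·)

/-- Positions reachable from `l` by a single Frog (Right) move. -/
def frogMoves : List Cell → List (List Cell)
  | [] => []
  | c :: rest =>
    (match c, rest with
     | Cell.E, Cell.F :: r => [Cell.F :: Cell.E :: r]
     | Cell.E, Cell.T :: Cell.F :: r => [Cell.F :: Cell.T :: Cell.E :: r]
     | _, _ => []) ++ (frogMoves rest).map (c :: ·)

/-- A weight which strictly decreases with every legal move: each Toad
contributes the number of squares strictly to its right, each Frog the number
of squares strictly to its left. -/
def wt : List Cell → ℕ
  | [] => 0
  | c :: rest =>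
    (if c = Cell.T then rest.length else 0) + rest.countP (· = Cell.F) + wt rest

/-- Game tree with fuel; since `wt` strictly decreases along moves and
positions of weight `0` have no moves, `gameAux n l` is the true game
tree of `l` whenever `wt l ≤ n`. -/
def gameAux : ℕ → List Cell → PGame
  | 0, _ => 0
  | n + 1, l =>
    PGame.mk {m // m ∈ toadMoves l} {m // m ∈ frogMoves l}
      (fun m => gameAux n m.1) (fun m => gameAux n m.1)

/-- The game (PGame) associated to a Toads and Frogs position. -/
def tfGame (l : List Cell) : PGame := gameAux (wt l + 1) l

/-- The game `{x | y}` with a single Left option `x` and single Right option `y`. -/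
def gmk (x y : PGame) : PGame :=
  PGame.mk PUnit PUnit (fun _ => x) (fun _ => y)

/-- The canonical game of a natural number. -/
def natGame : ℕ → PGame
  | 0 => 0
  | n + 1 => PGame.mk PUnit PEmpty (fun _ => natGame n) (fun x => x.elim)

/-- The canonical game of an integer. -/
def intGame : ℤ → PGame
  | Int.ofNat n => natGame n
  | Int.negSucc n => -natGame (n + 1)

/-- `(TF)^b` : the block `TF` repeated `b` times. -/
def tfBlock (b : ℕ) : List Cell := (List.replicate b [Cell.T, Cell.F]).flatten

/-!
Write the position as `L T^a F □ s`. As `L` has no empty square and does not end in a toad,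
Left's moves are the jump of the last toad of `T^a` over `F` and moves inside `s`; Right answers
the jump by sliding that frog back, which turns `T^a F □ s` into `T^(a-1) F □ T s`. For the tails
`s` collected in `RightTail` Right also has an answer to every move inside `s` that stays in the
family, so all these positions are `≤ 0`. The position of the theorem, with tail
`T^k F T □ F^b`, is then `≤ *`: Right wins moving first by `T □ F ↦ T F □`, reaching the tail
`T^k F T F □ F^(b-1)`; Left's slide `T □ ↦ □ T` reaches the tail `T^k F □ T F^b`; and Left's jump
is answered by the slide back, giving the same position with `a - 1`. Finally `* ≤ 1/2^n`
for `n ≥ 1`.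
-/

namespace SetTheory.PGame

def LF (x y : PGame.{u}) : Prop := (leLf x y).2

infix:50 " ⧏ " => SetTheory.PGame.LF

def LeftMoves : PGame.{u} → Type u
  | mk l _ _ _ => l

def RightMoves : PGame.{u} → Type u
  | mk _ r _ _ => r

def moveLeft : ∀ g : PGame.{u}, LeftMoves g → PGame.{u}
  | mk _ _ L _ => L

def moveRight : ∀ g : PGame.{u}, RightMoves g → PGame.{u}
  | mk _ _ _ R => R

@[simp]
theorem moveLeft_mk {xl xr : Type u} {xL : xl → PGame.{u}} {xR : xr → PGame.{u}} :
    (mk xl xr xL xR).moveLeft = xL := rfl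

theorem le_iff_forall_lf {x y : PGame.{u}} :
    x ≤ y ↔ (∀ i, x.moveLeft i ⧏ y) ∧ ∀ j, x ⧏ y.moveRight j := by
  cases x; cases y; exact Iff.rfl

theorem lf_iff_exists_le {x y : PGame.{u}} :
    x ⧏ y ↔ (∃ i, x ≤ y.moveLeft i) ∨ ∃ j, x.moveRight j ≤ y := by
  cases x; cases y; exact Iff.rfl

theorem le_trans_aux : ∀ x y z : PGame.{u},
    (x ≤ y → y ≤ z → x ≤ z) ∧ (x ≤ y → y ⧏ z → x ⧏ z) ∧ (x ⧏ y → y ≤ z → x ⧏ z) := by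
  intro x
  induction x with | mk xl xr xL xR ihxL ihxR => ?_
  intro y
  induction y with | mk yl yr yL yR ihyL ihyR => ?_
  intro z
  induction z with | mk zl zr zL zR ihzL ihzR => ?_
  refine ⟨fun h₁ h₂ => ?_, fun h₁ h₂ => ?_, fun h₁ h₂ => ?_⟩
  · exact le_iff_forall_lf.2
      ⟨fun i => (ihxL i _ _).2.2 ((le_iff_forall_lf.1 h₁).1 i) h₂,
        fun j => (ihzR j).2.1 h₁ ((le_iff_forall_lf.1 h₂).2 j)⟩
  · rcases lf_iff_exists_le.1 h₂ with ⟨i, hi⟩ | ⟨j, hj⟩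
    · exact lf_iff_exists_le.2 (.inl ⟨i, (ihzL i).1 h₁ hi⟩)
    · exact (ihyR j _).2.2 ((le_iff_forall_lf.1 h₁).2 j) hj
  · rcases lf_iff_exists_le.1 h₁ with ⟨i, hi⟩ | ⟨j, hj⟩
    · exact (ihyL i _).2.1 hi ((le_iff_forall_lf.1 h₂).1 i)
    · exact lf_iff_exists_le.2 (.inr ⟨j, (ihxR j _ _).1 hj h₂⟩)

theorem le_trans {x y z : PGame.{u}} (h₁ : x ≤ y) (h₂ : y ≤ z) : x ≤ z :=
  (le_trans_aux x y z).1 h₁ h₂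

theorem lf_of_le_of_lf {x y z : PGame.{u}} (h₁ : x ≤ y) (h₂ : y ⧏ z) : x ⧏ z :=
  (le_trans_aux x y z).2.1 h₁ h₂

theorem lf_of_moveRight_le {x y : PGame.{u}} {j : x.RightMoves} (h : x.moveRight j ≤ y) :
    x ⧏ y := by
  cases x; cases y; exact .inr ⟨j, h⟩

theorem zero_le_zero : (0 : PGame.{u}) ≤ 0 :=
  le_iff_forall_lf.2 ⟨fun i => PEmpty.elim i, fun j => PEmpty.elim j⟩

theorem le_zero_iff_forall_lf {x : PGame.{u}} : x ≤ 0 ↔ ∀ i, x.moveLeft i ⧏ 0 :=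
  le_iff_forall_lf.trans ⟨And.left, fun h => ⟨h, fun j => PEmpty.elim j⟩⟩

theorem zero_lf_powHalf (n : ℕ) : (0 : PGame.{u}) ⧏ powHalf n := by
  cases n <;> exact .inl ⟨PUnit.unit, zero_le_zero⟩

theorem zero_le_powHalf (n : ℕ) : (0 : PGame.{u}) ≤ powHalf n := by
  refine le_iff_forall_lf.2 ⟨fun i => PEmpty.elim i, fun j => ?_⟩
  cases n
  · exact PEmpty.elim j
  · exact zero_lf_powHalf _

def star : PGame.{u} := gmk 0 0

theorem zero_lf_star : (0 : PGame.{u}) ⧏ star :=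
  .inl ⟨PUnit.unit, zero_le_zero⟩

theorem star_le_powHalf {n : ℕ} (hn : 1 ≤ n) : star.{u} ≤ powHalf n := by
  obtain ⟨n, rfl⟩ := Nat.exists_eq_add_of_le' hn
  exact le_iff_forall_lf.2
    ⟨fun _ => zero_lf_powHalf _, fun _ => lf_of_moveRight_le (j := PUnit.unit) (zero_le_powHalf n)⟩

end SetTheory.PGame

open PGame Cell List

theorem mem_toadMoves_cons {c : Cell} {s m : List Cell} :
    m ∈ toadMoves (c :: s) ↔
      (c = T ∧ ∃ r, s = E :: r ∧ m = E :: T :: r) ∨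
      (c = T ∧ ∃ r, s = F :: E :: r ∧ m = E :: F :: T :: r) ∨
      ∃ m' ∈ toadMoves s, m = c :: m' := by
  conv_lhs => unfold toadMoves
  rcases c with _ | _ | _ <;> rcases s with _ | ⟨_ | _ | _, _ | ⟨_ | _ | _, _⟩⟩ <;> simp <;> grind

theorem mem_frogMoves_cons {c : Cell} {s m : List Cell} :
    m ∈ frogMoves (c :: s) ↔
      (c = E ∧ ∃ r, s = F :: r ∧ m = F :: E :: r) ∨
      (c = E ∧ ∃ r, s = T :: F :: r ∧ m = F :: T :: E :: r) ∨
      ∃ m' ∈ frogMoves s, m = c :: m' := by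
  conv_lhs => unfold frogMoves
  rcases c with _ | _ | _ <;> rcases s with _ | ⟨_ | _ | _, _ | ⟨_ | _ | _, _⟩⟩ <;> simp <;> grind

theorem wt_cons (c : Cell) (s : List Cell) :
    wt (c :: s) = (if c = T then s.length else 0) + s.countP (· = F) + wt s := rfl

theorem perm_and_wt_lt_of_mem_toadMoves {l m : List Cell} (h : m ∈ toadMoves l) :
    m ~ l ∧ wt m < wt l := by
  induction l generalizing m with
  | nil => simp [toadMoves] at h
  | cons c s ih =>
    rcases mem_toadMoves_cons.1 h with ⟨rfl, r, rfl, rfl⟩ | ⟨rfl, r, rfl, rfl⟩ | ⟨m', hm', rfl⟩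
    · exact ⟨.swap _ _ _, by simp [wt_cons]; omega⟩
    · exact ⟨by rw [perm_iff_count]; intro a; cases a <;> simp, by simp [wt_cons]; omega⟩
    · obtain ⟨hperm, hlt⟩ := ih hm'
      refine ⟨hperm.cons c, ?_⟩
      simp only [wt_cons, hperm.length_eq, hperm.countP_eq]
      omega

theorem perm_and_wt_lt_of_mem_frogMoves {l m : List Cell} (h : m ∈ frogMoves l) :
    m ~ l ∧ wt m < wt l := by
  induction l generalizing m with
  | nil => simp [frogMoves] at h
  | cons c s ih =>
    rcases mem_frogMoves_cons.1 h with ⟨rfl, r, rfl, rfl⟩ | ⟨rfl, r, rfl, rfl⟩ | ⟨m', hm', rfl⟩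
    · exact ⟨.swap _ _ _, by simp [wt_cons]⟩
    · exact ⟨by rw [perm_iff_count]; intro a; cases a <;> simp, by simp [wt_cons]; omega⟩
    · obtain ⟨hperm, hlt⟩ := ih hm'
      refine ⟨hperm.cons c, ?_⟩
      simp only [wt_cons, hperm.length_eq, hperm.countP_eq]
      omega

theorem gameAux_eq_of_wt_lt {n n' : ℕ} {l : List Cell} (hn : wt l < n) (hn' : wt l < n') :
    gameAux n l = gameAux n' l := by
  induction n generalizing n' l with
  | zero => omega
  | succ n ih =>
    obtain ⟨n', rfl⟩ : ∃ k, n' = k + 1 := ⟨n' - 1, by omega⟩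
    have hL (m : {m // m ∈ toadMoves l}) : gameAux n m.1 = gameAux n' m.1 := by
      have := (perm_and_wt_lt_of_mem_toadMoves m.2).2
      exact ih (by omega) (by omega)
    have hR (m : {m // m ∈ frogMoves l}) : gameAux n m.1 = gameAux n' m.1 := by
      have := (perm_and_wt_lt_of_mem_frogMoves m.2).2
      exact ih (by omega) (by omega)
    simp only [gameAux, funext hL, funext hR]

theorem tfGame_eq (l : List Cell) :
    tfGame l = PGame.mk {m // m ∈ toadMoves l} {m // m ∈ frogMoves l}
      (fun m => tfGame m.1) (fun m => tfGame m.1) := by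
  have hL (m : {m // m ∈ toadMoves l}) : gameAux (wt l) m.1 = tfGame m.1 :=
    gameAux_eq_of_wt_lt (perm_and_wt_lt_of_mem_toadMoves m.2).2 (Nat.lt_succ_self _)
  have hR (m : {m // m ∈ frogMoves l}) : gameAux (wt l) m.1 = tfGame m.1 :=
    gameAux_eq_of_wt_lt (perm_and_wt_lt_of_mem_frogMoves m.2).2 (Nat.lt_succ_self _)
  simp only [tfGame, gameAux, funext hL, funext hR]

theorem toadMoves_eq_nil_of_E_notMem {l : List Cell} (h : E ∉ l) : toadMoves l = [] := by
  induction l with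
  | nil => rfl
  | cons c s ih =>
    refine eq_nil_iff_forall_not_mem.2 fun m hm => ?_
    rcases mem_toadMoves_cons.1 hm with ⟨-, r, rfl, -⟩ | ⟨-, r, rfl, -⟩ | ⟨m', hm', -⟩ <;> simp_all

theorem getLast?_ne_of_cons {c x : Cell} {L : List Cell} (h : (c :: L).getLast? ≠ some x) :
    L.getLast? ≠ some x := by
  rcases L with _ | ⟨d, L⟩
  · simp
  · rwa [getLast?_cons_cons] at h

theorem mem_toadMoves_append_of_E_notMem {L s m : List Cell} (hL : E ∉ L)
    (hlast : L.getLast? ≠ some T) (hs : s.head? ≠ some E) :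
    m ∈ toadMoves (L ++ s) ↔ ∃ s' ∈ toadMoves s, m = L ++ s' := by
  induction L generalizing m with
  | nil => simp
  | cons c L ih =>
    have hL' : E ∉ L := fun h => hL (mem_cons_of_mem c h)
    have no_jump : c = T → (∀ r, L ++ s ≠ E :: r) ∧ ∀ r, L ++ s ≠ F :: E :: r := by
      rintro rfl
      rcases L with _ | ⟨_ | _ | _, _ | ⟨_ | _ | _, L⟩⟩ <;> rcases s with _ | ⟨_ | _ | _, s⟩ <;>
        simp_all
    simp only [cons_append, mem_toadMoves_cons, ih hL' (getLast?_ne_of_cons hlast)]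
    grind

theorem mem_toadMoves_replicate_T_F_E {a : ℕ} {s m : List Cell} :
    m ∈ toadMoves (replicate a T ++ F :: E :: s) ↔
      (∃ a', a = a' + 1 ∧ m = replicate a' T ++ E :: F :: T :: s) ∨
      ∃ s' ∈ toadMoves s, m = replicate a T ++ F :: E :: s' := by
  induction a generalizing m with
  | zero => simp [mem_toadMoves_cons]
  | succ a ih =>
    simp only [replicate_succ, cons_append, mem_toadMoves_cons, ih]
    rcases a with _ | a <;> simp [replicate_succ]

theorem mem_toadMoves_append_replicate_T_F_E {L s m : List Cell} {a : ℕ} (hL : E ∉ L)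
    (hlast : L.getLast? ≠ some T) (hm : m ∈ toadMoves (L ++ replicate a T ++ F :: E :: s)) :
    (∃ a', a = a' + 1 ∧ m = L ++ replicate a' T ++ E :: F :: T :: s) ∨
      ∃ s' ∈ toadMoves s, m = L ++ replicate a T ++ F :: E :: s' := by
  rw [append_assoc, mem_toadMoves_append_of_E_notMem hL hlast (by cases a <;> simp [replicate_succ])]
    at hm
  obtain ⟨s', hs', rfl⟩ := hm
  rcases mem_toadMoves_replicate_T_F_E.1 hs' with ⟨a', rfl, rfl⟩ | ⟨s'', hs'', rfl⟩ <;> simp_all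

theorem mem_toadMoves_replicate_T_F_T_E {k c : ℕ} {m : List Cell} :
    m ∈ toadMoves (replicate k T ++ F :: T :: E :: replicate c F) ↔
      m = replicate k T ++ F :: E :: T :: replicate c F := by
  rw [show replicate k T ++ F :: T :: E :: replicate c F =
      (replicate k T ++ [F]) ++ T :: E :: replicate c F by simp,
    mem_toadMoves_append_of_E_notMem (by simp) (by simp) (by simp)]
  simp [mem_toadMoves_cons, toadMoves_eq_nil_of_E_notMem]

theorem append_mem_frogMoves (P : List Cell) {s m : List Cell} (h : m ∈ frogMoves s) :
    P ++ m ∈ frogMoves (P ++ s) := by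
  induction P with
  | nil => exact h
  | cons c P ih => exact mem_frogMoves_cons.2 (.inr (.inr ⟨_, ih, rfl⟩))

theorem slide_mem_frogMoves (P r : List Cell) : P ++ F :: E :: r ∈ frogMoves (P ++ E :: F :: r) :=
  append_mem_frogMoves P (by simp [frogMoves])

theorem tfGame_le_zero_of_strategy (P : List Cell → Prop)
    (hP : ∀ l, P l → ∀ m ∈ toadMoves l, ∃ m' ∈ frogMoves m, P m') (l : List Cell) (hl : P l) :
    tfGame l ≤ 0 := by
  rw [tfGame_eq, le_zero_iff_forall_lf]
  rintro ⟨m, hm⟩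
  obtain ⟨m', hm', hPm'⟩ := hP l hl m hm
  rw [moveLeft_mk, tfGame_eq m]
  exact lf_of_moveRight_le (j := ⟨m', hm'⟩) (tfGame_le_zero_of_strategy P hP m' hPm')
termination_by wt l
decreasing_by
  exact (perm_and_wt_lt_of_mem_frogMoves hm').2.trans (perm_and_wt_lt_of_mem_toadMoves hm).2

theorem tfGame_lf_of_mem_frogMoves {l m : List Cell} {x : PGame} (hm : m ∈ frogMoves l)
    (h : tfGame m ≤ x) : tfGame l ⧏ x := by
  rw [tfGame_eq]
  exact lf_of_moveRight_le (j := ⟨m, hm⟩) h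

theorem tfGame_le_star {l : List Cell} (hL : ∀ m ∈ toadMoves l, tfGame m ⧏ star)
    (hR : ∃ m ∈ frogMoves l, tfGame m ≤ 0) : tfGame l ≤ star := by
  obtain ⟨m, hm, h⟩ := hR
  rw [tfGame_eq, le_iff_forall_lf]
  exact ⟨fun i => hL i.1 i.2, fun _ => by rw [← tfGame_eq]; exact tfGame_lf_of_mem_frogMoves hm h⟩

inductive RightTail : List Cell → Prop
  | jump (m c : ℕ) : RightTail (F :: E :: (replicate m T ++ replicate c F))
  | stuck (c : ℕ) : RightTail (F :: F :: E :: T :: replicate c F)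
  | pair (c : ℕ) : RightTail (F :: T :: F :: E :: replicate c F)
  | cons_T {s : List Cell} : RightTail s → RightTail (T :: s)

namespace RightTail

theorem head?_ne_E {s : List Cell} (h : RightTail s) : s.head? ≠ some E := by
  cases h <;> simp

theorem replicate_T_append (k : ℕ) {s : List Cell} (h : RightTail s) :
    RightTail (replicate k T ++ s) := by
  induction k with
  | zero => exact h
  | succ k ih => exact ih.cons_T

theorem exists_frogMoves_of_mem_toadMoves {s : List Cell} (h : RightTail s) :
    ∀ s' ∈ toadMoves s, ∃ s'' ∈ frogMoves s', RightTail s'' := by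
  induction h with
  | jump m c => simp [mem_toadMoves_cons, toadMoves_eq_nil_of_E_notMem]
  | stuck c => simp [mem_toadMoves_cons, toadMoves_eq_nil_of_E_notMem]
  | pair c =>
    intro s' hs'
    simp [mem_toadMoves_cons, toadMoves_eq_nil_of_E_notMem] at hs'
    exact ⟨_, hs' ▸ slide_mem_frogMoves [F] _, stuck c⟩
  | cons_T h ih =>
    intro s' hs'
    rcases mem_toadMoves_cons.1 hs' with ⟨-, r, rfl, -⟩ | ⟨-, r, rfl, rfl⟩ | ⟨s₁, hs₁, rfl⟩
    · exact absurd rfl h.head?_ne_E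
    · cases h with
      | jump m c =>
        exact ⟨_, slide_mem_frogMoves [] _, by simpa [replicate_succ] using jump (m + 1) c⟩
    · obtain ⟨s₂, hs₂, h₂⟩ := ih s₁ hs₁
      exact ⟨T :: s₂, append_mem_frogMoves [T] hs₂, h₂.cons_T⟩

end RightTail

theorem tfGame_le_zero_of_rightTail {L s : List Cell} (hL : E ∉ L) (hlast : L.getLast? ≠ some T)
    (hs : RightTail s) (a : ℕ) : tfGame (L ++ replicate a T ++ F :: E :: s) ≤ 0 := by
  refine tfGame_le_zero_of_strategy
    (fun l => ∃ a s, RightTail s ∧ l = L ++ replicate a T ++ F :: E :: s) ?_ _ ⟨a, s, hs, rfl⟩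
  rintro _ ⟨a, s, hs, rfl⟩ m hm
  rcases mem_toadMoves_append_replicate_T_F_E hL hlast hm with ⟨a, rfl, rfl⟩ | ⟨s', hs', rfl⟩
  · exact ⟨_, slide_mem_frogMoves _ _, a, T :: s, hs.cons_T, rfl⟩
  · obtain ⟨s'', hs'', h⟩ := hs.exists_frogMoves_of_mem_toadMoves s' hs'
    exact ⟨_, by simpa using append_mem_frogMoves (L ++ replicate a T ++ [F, E]) hs'',
      a, s'', h, rfl⟩

theorem tfGame_LTaF_box_TkFT_box_le_star {L : List Cell} (hL : E ∉ L) (hlast : L.getLast? ≠ some T)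
    (a k b : ℕ) :
    tfGame (L ++ replicate a T ++ F :: E :: (replicate k T ++ F :: T :: E :: replicate (b + 1) F))
      ≤ star := by
  refine tfGame_le_star (fun m hm => ?_) ⟨_, ?_,
    tfGame_le_zero_of_rightTail hL hlast ((RightTail.pair b).replicate_T_append k) a⟩
  · rcases mem_toadMoves_append_replicate_T_F_E hL hlast hm with ⟨a', rfl, rfl⟩ | ⟨s', hs', rfl⟩
    · exact tfGame_lf_of_mem_frogMoves (slide_mem_frogMoves _ _)
        (by simpa [replicate_succ] using tfGame_LTaF_box_TkFT_box_le_star hL hlast a' (k + 1) b)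
    · rw [mem_toadMoves_replicate_T_F_T_E.1 hs']
      refine lf_of_le_of_lf ?_ zero_lf_star
      simpa using tfGame_le_zero_of_rightTail hL hlast
        ((RightTail.jump 1 (b + 1)).replicate_T_append k) a
  · simpa [replicate_succ] using
      slide_mem_frogMoves (L ++ replicate a T ++ F :: E :: (replicate k T ++ [F, T])) (replicate b F)
termination_by a

/-- For any fixed `n ≥ 3` and all `a, k ≥ 0`, `b ≥ 1`:
`L T^a F □ T^k F T □ F^b ≤ 1/2^n`, where `L` is a `{T,F}`-string ending in `F`
(the empty prefix `L = []` being allowed). -/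
theorem LTaF_box_TkFT_box_Fb_le (n a k b : ℕ) (hn : 3 ≤ n) (hb : 1 ≤ b)
    (L : List Cell) (hLE : Cell.E ∉ L)
    (hL : L = [] ∨ L.getLast? = some Cell.F) :
    tfGame (L ++ List.replicate a Cell.T ++ [Cell.F, Cell.E] ++
        List.replicate k Cell.T ++ [Cell.F, Cell.T, Cell.E] ++
        List.replicate b Cell.F) ≤
      PGame.powHalf n := by
  obtain ⟨b, rfl⟩ := Nat.exists_eq_add_of_le' hb
  have hlast : L.getLast? ≠ some T := by
    rcases hL with rfl | hF
    · simp
    · simp [hF]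
  exact PGame.le_trans (by simpa using tfGame_LTaF_box_TkFT_box_le_star hLE hlast a k b)
    (star_le_powHalf (by omega))
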